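/- Let t = (α−β)/(log α − log β) for α > β > 0, and let μ be a probability measure on [0,∞) with ∫ 1/u² dμ(u) > (log α − log β)/(α−β). Suppose for each ε > 0, σ(ε) ∈ (0, log(α/β)) solves (1/σ)·∫ [u² + ε²(α−β)² e^σ/(α−βe^σ)²]⁻¹ dμ(u) = 1/(α−β), and set ε₀(ε) = ε(α−β)e^{σ(ε)/2}/(α − β e^{σ(ε)}). Then σ(ε) → log(α/β) as ε → 0⁺, and ε₀(ε) converges to the unique s > 0 satisfying ∫ (u² + s²)⁻¹ dμ(u) = (log α − log β)/(α−β). -/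

import Mathlib

/-!
Write `G t = ∫ (u² + t²)⁻¹ dμ(u)`, strictly decreasing in `t > 0`. The equation defining `σ(ε)`
says exactly `G(ε₀) = σ/(α−β)`, while `G(s) = log(α/β)/(α−β)`; since `σ < log(α/β)`, this forces
`ε₀ > s`. As `ε₀ · (α − βe^σ) = ε(α−β)e^{σ/2} = O(ε)`, the gap `α − βe^σ` tends to `0`, i.e.
`σ → log(α/β)`. Hence `G(ε₀) → G(s)`, and a strictly monotone function can approach `G(s)` only
along points approaching `s`.
-/

open MeasureTheory Filter Topology

theorem StrictAntiOn.tendsto_of_tendsto_comp {α β ι : Type*}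
    [LinearOrder α] [TopologicalSpace α] [OrderTopology α] [DenselyOrdered α]
    [LinearOrder β] [TopologicalSpace β] [OrderTopology β]
    {f : α → β} {S : Set α} {a : α} (hf : StrictAntiOn f S) (hS : S ∈ 𝓝 a)
    {l : Filter ι} {x : ι → α} (hx : ∀ᶠ i in l, x i ∈ S)
    (h : Tendsto (f ∘ x) l (𝓝 (f a))) : Tendsto x l (𝓝 a) := by
  have haS : a ∈ S := mem_of_mem_nhds hS
  refine tendsto_order.2 ⟨fun b hb => ?_, fun b hb => ?_⟩
  · obtain ⟨c, hc, hcS⟩ := exists_Ioc_subset_of_mem_nhds' hS hb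
    obtain ⟨p, hcp, hpa⟩ := exists_between hc.2
    have hpS : p ∈ S := hcS ⟨hcp, hpa.le⟩
    filter_upwards [hx, (tendsto_order.1 h).2 _ (hf hpS haS hpa)] with i hxi hfxi
    exact hc.1.trans_lt (hcp.trans ((hf.lt_iff_gt hxi hpS).1 hfxi))
  · obtain ⟨c, hc, hcS⟩ := exists_Ico_subset_of_mem_nhds' hS hb
    obtain ⟨p, hap, hpc⟩ := exists_between hc.1
    have hpS : p ∈ S := hcS ⟨hap.le, hpc⟩
    filter_upwards [hx, (tendsto_order.1 h).1 _ (hf haS hpS hap)] with i hxi hfxi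
    exact ((hf.lt_iff_gt hpS hxi).1 hfxi).trans (hpc.trans_le hc.2)

noncomputable def integralInvSqAddSq (μ : Measure ℝ) (t : ℝ) : ℝ :=
  ∫ u, (u ^ 2 + t ^ 2)⁻¹ ∂μ

section InvSqAddSq

variable (μ : Measure ℝ) [IsFiniteMeasure μ]

theorem integrable_inv_sq_add_sq {t : ℝ} (ht : t ≠ 0) :
    Integrable (fun u : ℝ => (u ^ 2 + t ^ 2)⁻¹) μ := by
  refine (integrable_const (t ^ 2)⁻¹).mono' (by fun_prop) (ae_of_all _ fun u => ?_)
  rw [Real.norm_of_nonneg (by positivity)]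
  gcongr
  exact le_add_of_nonneg_left (sq_nonneg u)

theorem strictAntiOn_integralInvSqAddSq [NeZero μ] :
    StrictAntiOn (integralInvSqAddSq μ) (Set.Ioi 0) := by
  intro a (ha : 0 < a) b (hb : 0 < b) hab
  have hgap : ∀ u : ℝ, 0 < (u ^ 2 + a ^ 2)⁻¹ - (u ^ 2 + b ^ 2)⁻¹ := fun u => by
    rw [sub_pos]
    gcongr
  have hint := (integrable_inv_sq_add_sq μ ha.ne').sub (integrable_inv_sq_add_sq μ hb.ne')
  have hsupp : Function.support (fun u : ℝ => (u ^ 2 + a ^ 2)⁻¹ - (u ^ 2 + b ^ 2)⁻¹) =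
      Set.univ := Set.eq_univ_of_forall fun u => (hgap u).ne'
  have := (integral_pos_iff_support_of_nonneg (fun u => (hgap u).le) hint).2
    (by simpa [hsupp] using NeZero.ne μ)
  rw [integral_sub (integrable_inv_sq_add_sq μ ha.ne') (integrable_inv_sq_add_sq μ hb.ne')]
    at this
  exact sub_pos.1 this

end InvSqAddSq

section Epsilon0

variable {α β : ℝ}

theorem sub_mul_exp_pos (hα : 0 < α) (hβ : 0 < β) {σ : ℝ} (hσ : σ < Real.log (α / β)) :
    0 < α - β * Real.exp σ := by
  have := (Real.lt_log_iff_exp_lt (div_pos hα hβ)).1 hσ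
  rw [lt_div_iff₀ hβ] at this
  linarith

theorem integralInvSqAddSq_epsilon0_eq (μ : Measure ℝ) {ε σ : ℝ} (hσ : σ ≠ 0)
    (h : (1 / σ) * ∫ u, (u ^ 2 +
      ε ^ 2 * (α - β) ^ 2 * Real.exp σ / (α - β * Real.exp σ) ^ 2)⁻¹ ∂μ = 1 / (α - β)) :
    integralInvSqAddSq μ (ε * (α - β) * Real.exp (σ / 2) / (α - β * Real.exp σ)) =
      σ / (α - β) := by
  have hsq : ε ^ 2 * (α - β) ^ 2 * Real.exp σ / (α - β * Real.exp σ) ^ 2 =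
      (ε * (α - β) * Real.exp (σ / 2) / (α - β * Real.exp σ)) ^ 2 := by
    rw [div_pow, mul_pow, mul_pow, ← Real.exp_nat_mul]
    ring_nf
  rw [hsq] at h
  rw [integralInvSqAddSq, div_eq_mul_one_div σ (α - β), ← h, ← mul_assoc,
    mul_one_div_cancel hσ, one_mul]

theorem sub_mul_exp_le_of_lt_epsilon0 (hα : 0 < α) (hβ : 0 < β) (hαβ : β < α)
    {s ε σ : ℝ} (hs : 0 < s) (hε : 0 < ε) (hσ : σ < Real.log (α / β))
    (hlt : s < ε * (α - β) * Real.exp (σ / 2) / (α - β * Real.exp σ)) :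
    α - β * Real.exp σ ≤ (α - β) * Real.exp (Real.log (α / β) / 2) / s * ε := by
  have hgap := sub_mul_exp_pos hα hβ hσ
  rw [lt_div_iff₀ hgap] at hlt
  have hexp : Real.exp (σ / 2) ≤ Real.exp (Real.log (α / β) / 2) := by gcongr
  rw [div_mul_eq_mul_div, le_div_iff₀ hs]
  nlinarith [mul_le_mul_of_nonneg_left hexp (by nlinarith : 0 ≤ ε * (α - β))]

theorem tendsto_log_div_of_sub_mul_exp_le (hα : 0 < α) (hβ : 0 < β) {σ : ℝ → ℝ} {C : ℝ}
    (h : ∀ ε > 0, 0 < α - β * Real.exp (σ ε) ∧ α - β * Real.exp (σ ε) ≤ C * ε) :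
    Tendsto σ (𝓝[>] 0) (𝓝 (Real.log (α / β))) := by
  have hgap : Tendsto (fun ε => α - β * Real.exp (σ ε)) (𝓝[>] 0) (𝓝 0) := by
    have hCε : Tendsto (fun ε : ℝ => C * ε) (𝓝[>] 0) (𝓝 0) := by
      simpa using ((continuous_const_mul C).tendsto 0).mono_left nhdsWithin_le_nhds
    refine tendsto_of_tendsto_of_tendsto_of_le_of_le' tendsto_const_nhds hCε ?_ ?_ <;>
      filter_upwards [self_mem_nhdsWithin] with ε hε
    exacts [(h ε hε).1.le, (h ε hε).2]
  have hexp : Tendsto (fun ε => Real.exp (σ ε)) (𝓝[>] 0) (𝓝 (α / β)) := by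
    have := (hgap.const_sub α).div_const β
    rw [sub_zero] at this
    refine this.congr fun ε => ?_
    field_simp
    ring
  simpa [Function.comp_def] using ((Real.continuousAt_log (div_pos hα hβ).ne').tendsto.comp hexp)

end Epsilon0

theorem sigma_epsilon0_limit_general
    (α β : ℝ) (hβ : 0 < β) (hαβ : β < α)
    (μ : Measure ℝ) [IsProbabilityMeasure μ]
    (σ : ℝ → ℝ)
    (hσ : ∀ ε : ℝ, 0 < ε → σ ε ∈ Set.Ioo 0 (Real.log (α / β)) ∧
      (1 / σ ε) *
        ∫ u, (u ^ 2 +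
          ε ^ 2 * (α - β) ^ 2 * Real.exp (σ ε) / (α - β * Real.exp (σ ε)) ^ 2)⁻¹ ∂μ
        = 1 / (α - β))
    (s : ℝ) (hs : 0 < s)
    (hseq : ∫ u, (u ^ 2 + s ^ 2)⁻¹ ∂μ = (Real.log α - Real.log β) / (α - β)) :
    Tendsto σ (nhdsWithin 0 (Set.Ioi 0)) (nhds (Real.log (α / β))) ∧
    Tendsto (fun ε => ε * (α - β) * Real.exp (σ ε / 2) / (α - β * Real.exp (σ ε)))
      (nhdsWithin 0 (Set.Ioi 0)) (nhds s) := by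
  have hα : 0 < α := hβ.trans hαβ
  set L := Real.log (α / β)
  set ε₀ := fun ε => ε * (α - β) * Real.exp (σ ε / 2) / (α - β * Real.exp (σ ε))
  have hG := strictAntiOn_integralInvSqAddSq μ
  have hGs : integralInvSqAddSq μ s = L / (α - β) := by
    rw [integralInvSqAddSq, hseq, ← Real.log_div hα.ne' hβ.ne']
  have hGε₀ (ε : ℝ) (hε : 0 < ε) : integralInvSqAddSq μ (ε₀ ε) = σ ε / (α - β) :=
    integralInvSqAddSq_epsilon0_eq μ (hσ ε hε).1.1.ne' (hσ ε hε).2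
  have hε₀pos (ε : ℝ) (hε : 0 < ε) : 0 < ε₀ ε :=
    div_pos (by have := sub_pos.2 hαβ; positivity) (sub_mul_exp_pos hα hβ (hσ ε hε).1.2)
  have hs_lt (ε : ℝ) (hε : 0 < ε) : s < ε₀ ε := by
    refine (hG.lt_iff_gt (hε₀pos ε hε) hs).1 ?_
    rw [hGε₀ ε hε, hGs]
    exact div_lt_div_of_pos_right (hσ ε hε).1.2 (sub_pos.2 hαβ)
  have hσL : Tendsto σ (𝓝[>] 0) (𝓝 L) :=
    tendsto_log_div_of_sub_mul_exp_le hα hβ fun ε hε =>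
      ⟨sub_mul_exp_pos hα hβ (hσ ε hε).1.2,
        sub_mul_exp_le_of_lt_epsilon0 hα hβ hαβ hs hε (hσ ε hε).1.2 (hs_lt ε hε)⟩
  refine ⟨hσL, hG.tendsto_of_tendsto_comp (Ioi_mem_nhds hs)
    (eventually_nhdsWithin_of_forall hε₀pos) ?_⟩
  rw [hGs]
  exact (hσL.div_const (α - β)).congr' <|
    eventually_nhdsWithin_of_forall fun ε hε => (hGε₀ ε hε).symm

/-- Let `α > β > 0`, and let `μ` be a probability measure on `[0,∞)` with
`∫ 1/u² dμ(u) > (log α − log β)/(α−β)`.  Suppose for each `ε > 0` the number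
`σ(ε) ∈ (0, log(α/β))` solves
`(1/σ)·∫ [u² + ε²(α−β)² e^σ/(α−βe^σ)²]⁻¹ dμ(u) = 1/(α−β)`, and let
`ε₀(ε) = ε(α−β)e^{σ(ε)/2}/(α − βe^{σ(ε)})`.  Then `σ(ε) → log(α/β)` as `ε → 0⁺`, and
`ε₀(ε)` converges to the unique `s > 0` with `∫ (u²+s²)⁻¹ dμ(u) = (log α − log β)/(α−β)`. -/
theorem sigma_epsilon0_limit
    (α β : ℝ) (hβ : 0 < β) (hαβ : β < α)
    (μ : Measure ℝ) [IsProbabilityMeasure μ] (hμ0 : μ (Set.Iio 0) = 0)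
    (hΞ : ENNReal.ofReal ((Real.log α - Real.log β) / (α - β)) <
      ∫⁻ u, ENNReal.ofReal (1 / u ^ 2) ∂μ)
    (σ : ℝ → ℝ)
    (hσ : ∀ ε : ℝ, 0 < ε → σ ε ∈ Set.Ioo 0 (Real.log (α / β)) ∧
      (1 / σ ε) *
        ∫ u, (u ^ 2 +
          ε ^ 2 * (α - β) ^ 2 * Real.exp (σ ε) / (α - β * Real.exp (σ ε)) ^ 2)⁻¹ ∂μ
        = 1 / (α - β))
    (s : ℝ) (hs : 0 < s)
    (hseq : ∫ u, (u ^ 2 + s ^ 2)⁻¹ ∂μ = (Real.log α - Real.log β) / (α - β)) :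
    Tendsto σ (nhdsWithin 0 (Set.Ioi 0)) (nhds (Real.log (α / β))) ∧
    Tendsto (fun ε => ε * (α - β) * Real.exp (σ ε / 2) / (α - β * Real.exp (σ ε)))
      (nhdsWithin 0 (Set.Ioi 0)) (nhds s) :=
  sigma_epsilon0_limit_general α β hβ hαβ μ σ hσ s hs hseq
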